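/- arXiv:1104.4755 — 2 statements merged into one kernel-verified Lean document; each statement's English description precedes it below -/
import Mathlib

section
/- For each n ≥ 1, the quotient k-vector space k[x]₀/W_n has dimension q^n(q^n − 1)/2. In particular, W_n is a proper T-space of k[x]₀. -/
/-!
Write `Q = q ^ n`. Since `g ^ Q = g(x ^ Q)` over `k`, the two generators of `W_n` substituted by
`g ∈ k[x]₀` give `g + g(x ^ Q)` and `g(x ^ Q) * g`; on monomials and their sums these yield the
relations `x ^ (t * Q + u) ≡ -x ^ (u * Q + t)` and `x ^ (t * (Q + 1)) ≡ 0`. They reduce every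
monomial to `± x ^ (a * Q + b)` with `a < b < Q`. Conversely, multiplication by `Q` modulo
`Q * Q - 1` swaps the base-`Q` digits of an exponent, so recording `e (a, b) - e (b, a)` for the
digits `(a, b)` of `m mod (Q * Q - 1)` defines a linear invariant of `x ^ m` that kills `W_n` and
separates those `Q * (Q - 1) / 2` monomials.
-/

open Polynomial

variable (k : Type*) [Field k] [Fintype k]

/-- `k[x]₀`: the free non-unital associative `k`-algebra on one generator `x`,
identified with the polynomials over `k` with zero constant term,
viewed as a `k`-submodule of `Polynomial k`. -/
noncomputable def A0 : Submodule k (Polynomial k) :=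
  LinearMap.ker (Polynomial.aeval (0 : k)).toLinearMap

/-- A `T`-space of `k[x]₀`: a `k`-linear subspace of `k[x]₀` closed under
substitutions `f ↦ f ∘ g` for `g ∈ k[x]₀`. -/
def IsTSpace (V : Submodule k (Polynomial k)) : Prop :=
  V ≤ A0 k ∧ ∀ f ∈ V, ∀ g ∈ A0 k, f.comp g ∈ V

/-- `H^S`: the smallest `T`-space of `k[x]₀` containing `H`. -/
noncomputable def TSp (H : Set (Polynomial k)) : Submodule k (Polynomial k) :=
  sInf {V | IsTSpace k V ∧ H ⊆ V}

/-- A `T`-ideal of `k[x]₀`: a `T`-space that is also an ideal of `k[x]₀`. -/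
def IsTIdeal (V : Submodule k (Polynomial k)) : Prop :=
  IsTSpace k V ∧ ∀ f ∈ V, ∀ g ∈ A0 k, g * f ∈ V

/-- `H^T`: the smallest `T`-ideal of `k[x]₀` containing `H`. -/
noncomputable def TId (H : Set (Polynomial k)) : Submodule k (Polynomial k) :=
  sInf {V | IsTIdeal k V ∧ H ⊆ V}

/-- `W_n = {x + x^{q^n}}^S + {x^{q^n+1}}^S`, where `q` is the order of `k`. -/
noncomputable def Wn (n : ℕ) : Submodule k (Polynomial k) :=
  TSp k {X + X ^ (Fintype.card k ^ n)} ⊔ TSp k {X ^ (Fintype.card k ^ n + 1)}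

/-- `U_n = {x - x^{q^{2n}}}^T`, where `q` is the order of `k`. -/
noncomputable def Un (n : ℕ) : Submodule k (Polynomial k) :=
  TId k {X - X ^ (Fintype.card k ^ (2 * n))}

section TSpace

variable (F : Type*) [Field F]

lemma mem_A0 {f : F[X]} : f ∈ A0 F ↔ f.eval 0 = 0 := by
  simp [A0, Polynomial.aeval_def, Polynomial.eval]

lemma X_mem_A0 : (X : F[X]) ∈ A0 F := by
  simp [mem_A0]

lemma X_pow_mem_A0 {m : ℕ} (hm : m ≠ 0) : (X : F[X]) ^ m ∈ A0 F := by
  simp [mem_A0, zero_pow hm]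

lemma A0_le_of_X_pow_mem {W : Submodule F F[X]} (h : ∀ m ≠ 0, (X : F[X]) ^ m ∈ W) :
    A0 F ≤ W := by
  intro f hf
  rw [f.as_sum_support]
  refine Submodule.sum_mem _ fun m hm => ?_
  have hm0 : m ≠ 0 := by
    rintro rfl
    exact mem_support_iff.1 hm (by rwa [coeff_zero_eq_eval_zero, ← mem_A0])
  rw [← smul_X_eq_monomial]
  exact Submodule.smul_mem _ _ (h m hm0)

lemma isTSpace_A0 : IsTSpace F (A0 F) :=
  ⟨le_rfl, fun f hf g hg => by rw [mem_A0] at *; rw [eval_comp, hg, hf]⟩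

lemma IsTSpace.sup {V W : Submodule F F[X]} (hV : IsTSpace F V) (hW : IsTSpace F W) :
    IsTSpace F (V ⊔ W) := by
  refine ⟨sup_le hV.1 hW.1, fun f hf g hg => ?_⟩
  obtain ⟨v, hv, w, hw, rfl⟩ := Submodule.mem_sup.1 hf
  rw [add_comp]
  exact Submodule.add_mem_sup (hV.2 v hv g hg) (hW.2 w hw g hg)

lemma isTSpace_TSp {H : Set F[X]} (hH : H ⊆ A0 F) : IsTSpace F (TSp F H) :=
  ⟨sInf_le ⟨isTSpace_A0 F, hH⟩, fun f hf g hg =>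
    Submodule.mem_sInf.2 fun V hV => hV.1.2 f (Submodule.mem_sInf.1 hf V hV) g hg⟩

lemma comp_mem_TSp_singleton {h g : F[X]} (hh : h ∈ A0 F) (hg : g ∈ A0 F) :
    h.comp g ∈ TSp F {h} :=
  (isTSpace_TSp F (Set.singleton_subset_iff.2 hh)).2 h
    (Submodule.mem_sInf.2 fun _ hV => hV.2 rfl) g hg

lemma TSp_singleton_le {h : F[X]} (hh : h ∈ A0 F) {V : Submodule F F[X]}
    (hV : ∀ g ∈ A0 F, h.comp g ∈ V) : TSp F {h} ≤ V := by
  let S := Submodule.span F (h.comp '' A0 F)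
  have hS : IsTSpace F S := by
    refine ⟨Submodule.span_le.2 ?_, fun f hf g hg => ?_⟩
    · rintro _ ⟨g, hg, rfl⟩
      exact (isTSpace_A0 F).2 h hh g hg
    induction hf using Submodule.span_induction with
    | mem x hx =>
      obtain ⟨g', hg', rfl⟩ := hx
      rw [comp_assoc]
      exact Submodule.subset_span ⟨_, (isTSpace_A0 F).2 g' hg' g hg, rfl⟩
    | zero => simp
    | add a b _ _ ha hb => rw [add_comp]; exact S.add_mem ha hb
    | smul c a _ ha => rw [smul_comp]; exact S.smul_mem c ha
  refine (sInf_le ⟨hS, ?_⟩ : TSp F {h} ≤ S).trans (Submodule.span_le.2 ?_)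
  · exact Set.singleton_subset_iff.2 (Submodule.subset_span ⟨X, X_mem_A0 F, comp_X⟩)
  · rintro _ ⟨g, hg, rfl⟩
    exact hV g hg

end TSpace

def pairsLT (Q : ℕ) : Finset (ℕ × ℕ) :=
  (Finset.range Q ×ˢ Finset.range Q).filter fun p => p.1 < p.2

lemma mem_pairsLT {Q : ℕ} {p : ℕ × ℕ} : p ∈ pairsLT Q ↔ p.1 < p.2 ∧ p.2 < Q := by
  simp only [pairsLT, Finset.mem_filter, Finset.mem_product, Finset.mem_range]
  omega

lemma card_pairsLT (Q : ℕ) : (pairsLT Q).card = Q * (Q - 1) / 2 := by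
  rw [← Finset.sum_range_id, pairsLT, Finset.card_filter, Finset.sum_product_right]
  refine Finset.sum_congr rfl fun b hb => ?_
  rw [← Finset.card_filter, Finset.range_eq_Ico, Finset.Ico_filter_lt,
    min_eq_right (Finset.mem_range.1 hb).le, Nat.card_Ico, Nat.sub_zero]

def digitPair (Q m : ℕ) : ℕ × ℕ := (m % (Q * Q - 1) / Q, m % (Q * Q - 1) % Q)

lemma mul_mul_self_modEq {Q : ℕ} (hQ : 0 < Q) (x : ℕ) : x * (Q * Q) ≡ x [MOD Q * Q - 1] := by
  refine ((Nat.modEq_iff_dvd' (Nat.le_mul_of_pos_right x (by positivity))).2 ⟨x, ?_⟩).symm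
  rw [Nat.sub_mul, one_mul, mul_comm]

lemma digitPair_congr {Q m m' : ℕ} (h : m ≡ m' [MOD Q * Q - 1]) :
    digitPair Q m = digitPair Q m' := by
  rw [digitPair, digitPair, h]

lemma digitPair_eq {Q a b : ℕ} (hb : b < Q) (h : a * Q + b + 1 < Q * Q) :
    digitPair Q (a * Q + b) = (a, b) := by
  rw [digitPair, Nat.mod_eq_of_lt (by omega), Nat.add_comm, Nat.add_mul_div_right _ _ (by omega),
    Nat.div_eq_of_lt hb, zero_add, Nat.add_mul_mod_self_right, Nat.mod_eq_of_lt hb]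

lemma digitPair_of_lt {Q a b : ℕ} (hab : a < b) (hb : b < Q) :
    digitPair Q (a * Q + b) = (a, b) :=
  digitPair_eq hb (by nlinarith)

lemma digitPair_mul_self {Q : ℕ} (hQ : 2 ≤ Q) (m : ℕ) :
    digitPair Q (m * Q) = (digitPair Q m).swap := by
  set a := m % (Q * Q - 1) / Q
  set b := m % (Q * Q - 1) % Q
  have hab : m % (Q * Q - 1) = a * Q + b := (Nat.div_add_mod' _ Q).symm
  have hb : b < Q := Nat.mod_lt _ (by omega)
  have hr : a * Q + b + 1 < Q * Q := by
    have := Nat.mod_lt m (show 0 < Q * Q - 1 by have := Nat.mul_le_mul hQ hQ; omega)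
    omega
  have ha : a < Q := by nlinarith
  -- `(Q - 1, Q - 1)` is the only digit pair excluded by `hr`, and it is fixed by the swap.
  have hswap : b * Q + a + 1 < Q * Q := by
    by_contra! h
    have : Q - 1 ≤ b := by nlinarith
    have : Q - 1 ≤ a := by nlinarith
    nlinarith
  have hmod : m * Q ≡ b * Q + a [MOD Q * Q - 1] := calc
    m * Q ≡ m % (Q * Q - 1) * Q [MOD Q * Q - 1] := (Nat.mod_modEq m _).symm.mul_right Q
    _ = a * (Q * Q) + b * Q := by rw [hab]; ring
    _ ≡ a + b * Q [MOD Q * Q - 1] := (mul_mul_self_modEq (by omega) a).add_right _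
    _ = b * Q + a := add_comm _ _
  rw [digitPair_congr hmod, digitPair_eq ha hswap]
  rfl

lemma LinearMap.apply_self_eq_zero_of_basis {ι R M N : Type*} [CommRing R] [AddCommGroup M]
    [Module R M] [AddCommGroup N] [Module R N] (b : Module.Basis ι R M)
    (B : M →ₗ[R] M →ₗ[R] N)
    (hskew : ∀ i j, B (b i) (b j) + B (b j) (b i) = 0) (hdiag : ∀ i, B (b i) (b i) = 0)
    (x : M) : B x x = 0 := by
  have hflip : B + B.flip = 0 := LinearMap.ext_basis b b hskew
  induction b.mem_span x using Submodule.span_induction with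
  | mem x hx => obtain ⟨i, rfl⟩ := hx; exact hdiag i
  | zero => simp
  | add x y _ _ hx hy =>
    have hxy : B x y + B y x = 0 := LinearMap.congr_fun₂ hflip x y
    calc B (x + y) (x + y) = B x x + B y y + (B x y + B y x) := by
          simp only [map_add, LinearMap.add_apply]; abel
      _ = 0 := by rw [hx, hy, hxy, add_zero, add_zero]
  | smul c x _ hx => simp [hx]

section DigitInvariant

variable (R : Type*) [CommRing R] (Q : ℕ)

def pairCoord (p : ℕ × ℕ) : pairsLT Q → R := fun i => if (i : ℕ × ℕ) = p then 1 else 0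

noncomputable def digitInvariant : R[X] →ₗ[R] (pairsLT Q → R) :=
  (basisMonomials R).constr R fun m =>
    pairCoord R Q (digitPair Q m) - pairCoord R Q (digitPair Q m).swap

noncomputable def pairPoly : (pairsLT Q → R) →ₗ[R] R[X] :=
  (Pi.basisFun R (pairsLT Q)).constr R fun i => X ^ ((i : ℕ × ℕ).1 * Q + (i : ℕ × ℕ).2)

variable {R Q}

lemma pairCoord_of_mem {p : ℕ × ℕ} (hp : p ∈ pairsLT Q) :
    pairCoord R Q p = Pi.single ⟨p, hp⟩ 1 := by
  ext i
  simp [pairCoord, Pi.single_apply, Subtype.ext_iff]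

lemma pairCoord_swap_of_mem {p : ℕ × ℕ} (hp : p ∈ pairsLT Q) : pairCoord R Q p.swap = 0 := by
  ext i
  simp only [pairCoord, Pi.zero_apply, ite_eq_right_iff]
  intro h
  have hi := mem_pairsLT.1 i.2
  rw [h, Prod.fst_swap, Prod.snd_swap] at hi
  exact absurd (mem_pairsLT.1 hp).1 (by omega)

lemma digitInvariant_X_pow (m : ℕ) : digitInvariant R Q (X ^ m) =
    pairCoord R Q (digitPair Q m) - pairCoord R Q (digitPair Q m).swap := by
  have : (X ^ m : R[X]) = basisMonomials R m := by rw [coe_basisMonomials, X_pow_eq_monomial]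
  rw [this, digitInvariant, Module.Basis.constr_basis]

lemma pairPoly_single (i : pairsLT Q) :
    pairPoly R Q (Pi.single i 1) = X ^ ((i : ℕ × ℕ).1 * Q + (i : ℕ × ℕ).2) := by
  rw [pairPoly, ← Pi.basisFun_apply, Module.Basis.constr_basis]

lemma digitInvariant_pairPoly (v : pairsLT Q → R) : digitInvariant R Q (pairPoly R Q v) = v := by
  suffices digitInvariant R Q ∘ₗ pairPoly R Q = LinearMap.id from LinearMap.congr_fun this v
  refine (Pi.basisFun R (pairsLT Q)).ext fun i => ?_
  have hi := mem_pairsLT.1 i.2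
  rw [LinearMap.comp_apply, Pi.basisFun_apply, pairPoly_single, digitInvariant_X_pow,
    digitPair_of_lt hi.1 hi.2, pairCoord_swap_of_mem i.2, pairCoord_of_mem i.2, sub_zero]
  rfl

lemma digitInvariant_X_pow_add_X_pow_swap (hQ : 2 ≤ Q) (t u : ℕ) :
    digitInvariant R Q (X ^ (t * Q + u)) + digitInvariant R Q (X ^ (u * Q + t)) = 0 := by
  have hmod : u * Q + t ≡ (t * Q + u) * Q [MOD Q * Q - 1] := by
    have := ((mul_mul_self_modEq (Q := Q) (by omega) t).add_right (u * Q)).symm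
    rwa [add_comm t, ← mul_assoc, ← add_mul] at this
  rw [digitInvariant_X_pow, digitInvariant_X_pow, digitPair_congr hmod, digitPair_mul_self hQ,
    Prod.swap_swap]
  abel

-- Antisymmetry alone would not do in characteristic 2: the digits of `t * (Q + 1)` are fixed by
-- the swap, so the two coordinates cancel.
lemma digitInvariant_X_pow_mul_succ (hQ : 2 ≤ Q) (t : ℕ) :
    digitInvariant R Q (X ^ (t * (Q + 1))) = 0 := by
  have hmod : t * (Q + 1) ≡ t * (Q + 1) * Q [MOD Q * Q - 1] := by
    have := ((mul_mul_self_modEq (Q := Q) (by omega) t).add_right (t * Q)).symm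
    convert this using 1 <;> ring
  have hfix : (digitPair Q (t * (Q + 1))).swap = digitPair Q (t * (Q + 1)) := by
    rw [← digitPair_mul_self hQ, ← digitPair_congr hmod]
  rw [digitInvariant_X_pow, hfix, sub_self]

lemma digitInvariant_add_expand (hQ : 2 ≤ Q) (g : R[X]) :
    digitInvariant R Q (g + expand R Q g) = 0 := by
  suffices digitInvariant R Q ∘ₗ (LinearMap.id + (expand R Q).toLinearMap) = 0 from
    LinearMap.congr_fun this g
  refine (basisMonomials R).ext fun m => ?_
  simpa [coe_basisMonomials, ← X_pow_eq_monomial, ← pow_mul, mul_comm m Q]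
    using digitInvariant_X_pow_add_X_pow_swap (R := R) hQ 0 m

lemma digitInvariant_expand_mul_self (hQ : 2 ≤ Q) (g : R[X]) :
    digitInvariant R Q (expand R Q g * g) = 0 := by
  let B : R[X] →ₗ[R] R[X] →ₗ[R] (pairsLT Q → R) :=
    ((LinearMap.mul R R[X]).comp (expand R Q).toLinearMap).compr₂ (digitInvariant R Q)
  refine B.apply_self_eq_zero_of_basis (basisMonomials R) (fun t u => ?_) (fun t => ?_) g
  · simpa [B, coe_basisMonomials, ← X_pow_eq_monomial, ← pow_mul, ← pow_add, mul_comm _ Q]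
      using digitInvariant_X_pow_add_X_pow_swap (R := R) hQ t u
  · simpa [B, coe_basisMonomials, ← X_pow_eq_monomial, ← pow_mul, ← pow_add, mul_comm _ Q,
      mul_add] using digitInvariant_X_pow_mul_succ (R := R) hQ t

-- For `u < t` the relation trades `X ^ (t * Q + u)` for the smaller exponent `u * Q + t`.
lemma X_pow_mem_sup_range_pairPoly (hQ : 2 ≤ Q) {W : Submodule R R[X]}
    (hdiag : ∀ t ≠ 0, (X : R[X]) ^ (t * (Q + 1)) ∈ W)
    (hswap : ∀ t u, u < t → (X : R[X]) ^ (t * Q + u) + X ^ (u * Q + t) ∈ W) :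
    ∀ m ≠ 0, (X : R[X]) ^ m ∈ W ⊔ LinearMap.range (pairPoly R Q) := by
  intro m
  induction m using Nat.strong_induction_on with
  | _ m ih =>
    intro hm
    set t := m / Q
    set u := m % Q
    have hm_eq : m = t * Q + u := (Nat.div_add_mod' m Q).symm
    have hu : u < Q := Nat.mod_lt m (by omega)
    rcases lt_trichotomy t u with htu | htu | hut
    · refine Submodule.mem_sup_right
        ⟨Pi.single ⟨(t, u), mem_pairsLT.2 ⟨htu, hu⟩⟩ 1, ?_⟩
      rw [pairPoly_single, hm_eq]
    · refine Submodule.mem_sup_left ?_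
      rw [hm_eq, ← htu, ← mul_add_one]
      exact hdiag t (by rintro h; rw [← htu, h] at hm_eq; omega)
    · have hlt : u * Q + t < m := by nlinarith
      have hmem := Submodule.sub_mem _ (Submodule.mem_sup_left (hswap t u hut))
        (ih _ hlt (by omega))
      rwa [add_sub_cancel_right, ← hm_eq] at hmem

end DigitInvariant

lemma range_pairPoly_le_A0 (F : Type*) [Field F] (Q : ℕ) :
    LinearMap.range (pairPoly F Q) ≤ A0 F := by
  rw [pairPoly, Module.Basis.constr_range, Submodule.span_le]
  rintro _ ⟨i, rfl⟩
  exact X_pow_mem_A0 F (by have := (mem_pairsLT.1 i.2).1; omega)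

section Wn

variable (n : ℕ)

lemma two_le_card_pow (hn : 1 ≤ n) : 2 ≤ Fintype.card k ^ n :=
  Nat.one_lt_pow (by omega) Fintype.one_lt_card

lemma pow_card_pow_eq_expand (f : k[X]) :
    f ^ (Fintype.card k ^ n) = expand k (Fintype.card k ^ n) f := by
  rw [expand_pow]
  induction n with
  | zero => simp
  | succ n ih =>
    rw [Function.iterate_succ_apply', ← ih, FiniteField.expand_card, ← pow_mul, pow_succ]

lemma X_add_X_pow_comp (g : k[X]) :
    (X + X ^ (Fintype.card k ^ n)).comp g = g + expand k (Fintype.card k ^ n) g := by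
  rw [add_comp, X_comp, pow_comp, X_comp, pow_card_pow_eq_expand]

lemma X_pow_succ_comp (g : k[X]) :
    (X ^ (Fintype.card k ^ n + 1)).comp g = expand k (Fintype.card k ^ n) g * g := by
  rw [pow_comp, X_comp, pow_succ, pow_card_pow_eq_expand]

lemma X_add_X_pow_mem_A0 : (X + X ^ (Fintype.card k ^ n) : k[X]) ∈ A0 k :=
  Submodule.add_mem _ (X_mem_A0 k) (X_pow_mem_A0 k (by positivity))

lemma isTSpace_Wn : IsTSpace k (Wn k n) :=
  (isTSpace_TSp k (Set.singleton_subset_iff.2 (X_add_X_pow_mem_A0 k n))).sup k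
    (isTSpace_TSp k (Set.singleton_subset_iff.2 (X_pow_mem_A0 k (by omega))))

lemma add_expand_mem_Wn {g : k[X]} (hg : g ∈ A0 k) :
    g + expand k (Fintype.card k ^ n) g ∈ Wn k n := by
  rw [← X_add_X_pow_comp]
  exact Submodule.mem_sup_left (comp_mem_TSp_singleton k (X_add_X_pow_mem_A0 k n) hg)

lemma expand_mul_self_mem_Wn {g : k[X]} (hg : g ∈ A0 k) :
    expand k (Fintype.card k ^ n) g * g ∈ Wn k n := by
  rw [← X_pow_succ_comp]
  exact Submodule.mem_sup_right (comp_mem_TSp_singleton k (X_pow_mem_A0 k (by omega)) hg)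

lemma X_pow_mul_succ_mem_Wn {t : ℕ} (ht : t ≠ 0) :
    (X : k[X]) ^ (t * (Fintype.card k ^ n + 1)) ∈ Wn k n := by
  have := expand_mul_self_mem_Wn k n (X_pow_mem_A0 k ht)
  rw [map_pow, expand_X, ← pow_mul, ← pow_add] at this
  convert this using 2
  ring

lemma X_pow_add_X_pow_mem_Wn {t u : ℕ} (h : u < t) :
    (X : k[X]) ^ (t * Fintype.card k ^ n + u) + X ^ (u * Fintype.card k ^ n + t) ∈ Wn k n := by
  rcases Nat.eq_zero_or_pos u with rfl | hu
  · have := add_expand_mem_Wn k n (X_pow_mem_A0 k (show t ≠ 0 by omega))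
    simpa [← pow_mul, mul_comm, add_comm] using this
  · have hpolar := Submodule.sub_mem _
      (expand_mul_self_mem_Wn k n (Submodule.add_mem _ (X_pow_mem_A0 k (show t ≠ 0 by omega))
        (X_pow_mem_A0 k (show u ≠ 0 by omega))))
      (Submodule.add_mem _ (X_pow_mul_succ_mem_Wn k n (show t ≠ 0 by omega))
        (X_pow_mul_succ_mem_Wn k n (show u ≠ 0 by omega)))
    convert hpolar using 1
    simp only [map_add, map_pow, expand_X, ← pow_mul, add_mul, mul_add, ← pow_add]
    ring_nf

lemma Wn_le_ker_digitInvariant (hn : 1 ≤ n) :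
    Wn k n ≤ LinearMap.ker (digitInvariant k (Fintype.card k ^ n)) := by
  have hQ := two_le_card_pow k n hn
  refine sup_le (TSp_singleton_le k (X_add_X_pow_mem_A0 k n) fun g _ => ?_)
    (TSp_singleton_le k (X_pow_mem_A0 k (by omega)) fun g _ => ?_)
  · rw [LinearMap.mem_ker, X_add_X_pow_comp, digitInvariant_add_expand hQ]
  · rw [LinearMap.mem_ker, X_pow_succ_comp, digitInvariant_expand_mul_self hQ]

lemma A0_le_Wn_sup_range_pairPoly (hn : 1 ≤ n) :
    A0 k ≤ Wn k n ⊔ LinearMap.range (pairPoly k (Fintype.card k ^ n)) :=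
  A0_le_of_X_pow_mem k <| X_pow_mem_sup_range_pairPoly (two_le_card_pow k n hn)
    (fun _ ht => X_pow_mul_succ_mem_Wn k n ht) (fun _ _ h => X_pow_add_X_pow_mem_Wn k n h)

lemma comap_Wn_eq_ker (hn : 1 ≤ n) : (Wn k n).comap (A0 k).subtype =
    LinearMap.ker (digitInvariant k (Fintype.card k ^ n) ∘ₗ (A0 k).subtype) := by
  ext ⟨f, hf⟩
  simp only [Submodule.mem_comap, LinearMap.mem_ker, LinearMap.comp_apply, Submodule.subtype_apply]
  refine ⟨fun h => Wn_le_ker_digitInvariant k n hn h, fun h => ?_⟩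
  obtain ⟨w, hw, _, ⟨v, rfl⟩, rfl⟩ :=
    Submodule.mem_sup.1 (A0_le_Wn_sup_range_pairPoly k n hn hf)
  rw [map_add, LinearMap.mem_ker.1 (Wn_le_ker_digitInvariant k n hn hw), zero_add,
    digitInvariant_pairPoly] at h
  rwa [h, map_zero, add_zero]

end Wn

/-- For each `n ≥ 1`, `dim k[x]₀/W_n = q^n (q^n - 1)/2`; in particular `W_n` is a
proper `T`-space of `k[x]₀`. -/
theorem finrank_quotient_Wn (n : ℕ) (hn : 1 ≤ n) :
    Module.finrank k (↥(A0 k) ⧸ (Wn k n).comap (A0 k).subtype) =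
      Fintype.card k ^ n * (Fintype.card k ^ n - 1) / 2 ∧
    IsTSpace k (Wn k n) ∧ Wn k n ≠ A0 k := by
  set Q := Fintype.card k ^ n
  have hQ : 2 ≤ Q := two_le_card_pow k n hn
  have hsurj : Function.Surjective (digitInvariant k Q ∘ₗ (A0 k).subtype) := fun v =>
    ⟨⟨pairPoly k Q v, range_pairPoly_le_A0 k Q ⟨v, rfl⟩⟩, digitInvariant_pairPoly v⟩
  have hrank :
      Module.finrank k (↥(A0 k) ⧸ (Wn k n).comap (A0 k).subtype) = Q * (Q - 1) / 2 := by
    rw [comap_Wn_eq_ker k n hn, (LinearMap.quotKerEquivOfSurjective _ hsurj).finrank_eq,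
      Module.finrank_fintype_fun_eq_card, Fintype.card_coe, card_pairsLT]
  refine ⟨hrank, isTSpace_Wn k n, fun hW => ?_⟩
  rw [hW, Submodule.comap_subtype_self, Module.finrank_zero_of_subsingleton] at hrank
  have : 2 * 1 ≤ Q * (Q - 1) := Nat.mul_le_mul hQ (by omega)
  omega
end

section
/- For every positive integer r and every integer m ≥ 1, the element x + (−1)^{m+1} x^{q^{2^r m}} belongs to the T-space {x + x^{q^{2^r}}}^S of k[x]₀. -/
open Polynomial

variable (k : Type*) [Field k] [Fintype k]

lemma subset_TSp (H : Set (Polynomial k)) : H ⊆ (TSp k H : Set (Polynomial k)) := by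
  intro f hf
  simp only [TSp, SetLike.mem_coe, Submodule.mem_sInf]
  intro V hV
  exact hV.2 hf

lemma comp_mem_TSp (H : Set (Polynomial k)) {f g : Polynomial k}
    (hf : f ∈ TSp k H) (hg : g ∈ A0 k) : f.comp g ∈ TSp k H := by
  simp only [TSp, Submodule.mem_sInf] at hf ⊢
  intro V hV
  exact hV.1.2 f (hf V hV) g hg

/-- For every positive integer `r` and every `m ≥ 1`,
`x + (-1)^{m+1} x^{q^{2^r m}} ∈ {x + x^{q^{2^r}}}^S`. -/
theorem mem_TSp_X_add_X_pow (r : ℕ) (hr : 1 ≤ r) (m : ℕ) (hm : 1 ≤ m) :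
    X + ((-1 : k) ^ (m + 1)) • X ^ (Fintype.card k ^ (2 ^ r * m))
      ∈ TSp k {X + X ^ (Fintype.card k ^ 2 ^ r)} := by
  induction m, hm using Nat.le_induction with
  | base =>
    have : ((-1 : k) ^ (1 + 1)) • (X : Polynomial k) ^ (Fintype.card k ^ (2 ^ r * 1))
        = X ^ (Fintype.card k ^ 2 ^ r) := by
      norm_num
    rw [this]
    exact subset_TSp k _ rfl
  | succ m hm ih =>
    have hq : 1 ≤ Fintype.card k := Fintype.card_pos
    have hg : (X : Polynomial k) ^ (Fintype.card k ^ (2 ^ r * m)) ∈ A0 k := by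
      simp only [A0, LinearMap.mem_ker, AlgHom.toLinearMap_apply, map_pow, aeval_X]
      exact zero_pow (by positivity)
    have hcomp := comp_mem_TSp k {X + X ^ (Fintype.card k ^ 2 ^ r)}
      (subset_TSp k _ rfl) hg
    have hcompeq : (X + X ^ (Fintype.card k ^ 2 ^ r)).comp
        ((X : Polynomial k) ^ (Fintype.card k ^ (2 ^ r * m)))
        = X ^ (Fintype.card k ^ (2 ^ r * m)) + X ^ (Fintype.card k ^ (2 ^ r * (m + 1))) := by
      rw [add_comp, X_comp, pow_comp, X_comp, ← pow_mul, ← pow_add]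
      ring_nf
    rw [hcompeq] at hcomp
    have key := Submodule.add_mem _ ih
      (Submodule.smul_mem _ ((-1 : k) ^ m) hcomp)
    have : (X : Polynomial k) + ((-1 : k) ^ (m + 1 + 1)) • X ^ (Fintype.card k ^ (2 ^ r * (m + 1)))
        = (X + ((-1 : k) ^ (m + 1)) • X ^ (Fintype.card k ^ (2 ^ r * m)))
          + ((-1 : k) ^ m) • (X ^ (Fintype.card k ^ (2 ^ r * m))
            + X ^ (Fintype.card k ^ (2 ^ r * (m + 1)))) := by
      simp only [smul_add, pow_succ, neg_mul, one_mul, neg_smul, neg_neg]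
      module
    rw [this]
    exact key
end
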